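/- arXiv:1911.06624 — 2 statements merged into one kernel-verified Lean document; each statement's English description precedes it below -/
import Mathlib

section
/- For every w ∈ L^p(Ω;ℝ²), the 2D ray transform satisfies D[w] ∈ L^p(Σ;ℝ) and there exists a constant C = C(Ω,p) such that ‖D[w]‖_{L^p(Σ;ℝ)}^p ≤ C ‖w‖_{L^p(Ω;ℝ²)}^p. -/
open MeasureTheory Metric Set Filter ENNReal

noncomputable section

/-- A mollifier: smooth, compactly supported, nonnegative, radially symmetric, integral one. -/
def IsMollifier {n : ℕ} (ρ : EuclideanSpace ℝ (Fin n) → ℝ) : Prop :=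
  ContDiff ℝ (⊤ : ℕ∞) ρ ∧ HasCompactSupport ρ ∧ (∀ x, 0 ≤ ρ x) ∧
    (∀ x y : EuclideanSpace ℝ (Fin n), ‖x‖ = ‖y‖ → ρ x = ρ y) ∧ (∫ x, ρ x) = 1

/-- The separation property of a mollifier. -/
def SeparationProperty {n : ℕ} (ρ : EuclideanSpace ℝ (Fin n) → ℝ) : Prop :=
  ∀ τ : ℝ, 0 < τ → τ < ⨆ z, ρ z →
    ∃ η : ℝ, 0 < η ∧ {z | τ ≤ ρ z} = Metric.closedBall (0 : EuclideanSpace ℝ (Fin n)) η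

/-- `‖w‖_{L^p(Ω)}^p` as an extended real number. -/
def lpPow {n : ℕ} {F : Type*} [NormedAddCommGroup F] (p : ℝ)
    (Ω : Set (EuclideanSpace ℝ (Fin n))) (w : EuclideanSpace ℝ (Fin n) → F) : ℝ≥0∞ :=
  ∫⁻ x in Ω, (‖w x‖₊ : ℝ≥0∞) ^ p

/-- The Gagliardo seminorm `|w|_{W^{s,p}(Ω)}^p` (to the power p). -/
def gagliardo {n : ℕ} {F : Type*} [NormedAddCommGroup F] (p s : ℝ)
    (Ω : Set (EuclideanSpace ℝ (Fin n))) (w : EuclideanSpace ℝ (Fin n) → F) : ℝ≥0∞ :=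
  ∫⁻ x in Ω, ∫⁻ y in Ω, ENNReal.ofReal (‖w x - w y‖ ^ p / ‖x - y‖ ^ ((n : ℝ) + p * s))

/-- The double-integral regularizer `Φ_d^l`. -/
def PhiReg {n : ℕ} {F : Type*} [NormedAddCommGroup F] (p s : ℝ) (l : ℕ)
    (Ω : Set (EuclideanSpace ℝ (Fin n))) (ρ : EuclideanSpace ℝ (Fin n) → ℝ)
    (d : F → F → ℝ) (w : EuclideanSpace ℝ (Fin n) → F) : ℝ≥0∞ :=
  ∫⁻ x in Ω, ∫⁻ y in Ω,
    ENNReal.ofReal (d (w x) (w y) ^ p / ‖x - y‖ ^ ((n : ℝ) + p * s) * ρ (x - y) ^ l)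

/-- Membership in the fractional Sobolev set `W^{s,p}(Ω;K)`. -/
def MemWsp {n : ℕ} {F : Type*} [NormedAddCommGroup F] [MeasurableSpace F] (p s : ℝ)
    (Ω : Set (EuclideanSpace ℝ (Fin n))) (K : Set F)
    (w : EuclideanSpace ℝ (Fin n) → F) : Prop :=
  AEMeasurable w (volume.restrict Ω) ∧ lpPow p Ω w < ⊤ ∧ gagliardo p s Ω w < ⊤ ∧
    ∀ᵐ x ∂(volume.restrict Ω), w x ∈ K

/-- `d` is a metric on the set `K`. -/
def IsMetricOn {F : Type*} (K : Set F) (d : F → F → ℝ) : Prop :=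
  (∀ a ∈ K, ∀ b ∈ K, 0 ≤ d a b) ∧
    (∀ a ∈ K, ∀ b ∈ K, (d a b = 0 ↔ a = b)) ∧
    (∀ a ∈ K, ∀ b ∈ K, d a b = d b a) ∧
    (∀ a ∈ K, ∀ b ∈ K, ∀ c ∈ K, d a c ≤ d a b + d b c)

/-- `d` is normalized equivalent to the Euclidean distance on `K`. -/
def NormalizedEquiv {F : Type*} [NormedAddCommGroup F] (K : Set F) (d : F → F → ℝ)
    (Cu : ℝ) : Prop :=
  ∀ a ∈ K, ∀ b ∈ K, ‖a - b‖ ≤ d a b ∧ d a b ≤ Cu * ‖a - b‖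

/-- Ω has Lipschitz boundary: near each boundary point, in suitable rotated coordinates,
Ω is the region on one side of the graph of a Lipschitz function. -/
def HasLipschitzBoundary {n : ℕ} (Ω : Set (EuclideanSpace ℝ (Fin n))) : Prop :=
  ∀ z ∈ frontier Ω, ∃ r L : ℝ, 0 < r ∧ 0 ≤ L ∧
    ∃ (e : EuclideanSpace ℝ (Fin n) ≃ₗᵢ[ℝ] EuclideanSpace ℝ (Fin n)) (i : Fin n)
      (g : EuclideanSpace ℝ (Fin n) → ℝ),
      LipschitzWith L.toNNReal g ∧
      (∀ x y : EuclideanSpace ℝ (Fin n), (∀ j, j ≠ i → x j = y j) → g x = g y) ∧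
      ∀ x ∈ Metric.ball z r, (x ∈ Ω ↔ g (e x) < e x i)

/-- The Radon transform (component-wise), as an integral over the hyperplane
`{x : x·φ = r}` with respect to the `(n-1)`-dimensional Hausdorff measure. -/
def radonT {n m : ℕ} (w : EuclideanSpace ℝ (Fin n) → EuclideanSpace ℝ (Fin m))
    (r : ℝ) (φ : EuclideanSpace ℝ (Fin n)) : EuclideanSpace ℝ (Fin m) :=
  ∫ x in {x : EuclideanSpace ℝ (Fin n) | @inner ℝ _ _ x φ = r}, w x ∂μH[(n : ℝ) - 1]

/-- The Radon transform of a scalar function. -/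
def radonS {n : ℕ} (w : EuclideanSpace ℝ (Fin n) → ℝ) (r : ℝ)
    (φ : EuclideanSpace ℝ (Fin n)) : ℝ :=
  ∫ x in {x : EuclideanSpace ℝ (Fin n) | @inner ℝ _ _ x φ = r}, w x ∂μH[(n : ℝ) - 1]

/-- `‖v‖_{L^p(Σ)}^p`, where `Σ = [0,∞) × S^{n-1}`. -/
def sigmaLpPow {n : ℕ} {F : Type*} [NormedAddCommGroup F] (p : ℝ)
    (v : ℝ → EuclideanSpace ℝ (Fin n) → F) : ℝ≥0∞ :=
  ∫⁻ φ in Metric.sphere (0 : EuclideanSpace ℝ (Fin n)) 1,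
    ∫⁻ r in Set.Ici (0 : ℝ), (‖v r φ‖₊ : ℝ≥0∞) ^ p ∂volume ∂μH[(n : ℝ) - 1]

/-- Rotation of `θ ∈ ℝ²` by `π/2`. -/
def perp2 (θ : EuclideanSpace ℝ (Fin 2)) : EuclideanSpace ℝ (Fin 2) :=
  (EuclideanSpace.equiv (Fin 2) ℝ).symm ![-θ 1, θ 0]

/-- The 2D ray transform. -/
def rayT (w : EuclideanSpace ℝ (Fin 2) → EuclideanSpace ℝ (Fin 2)) (r : ℝ)
    (θ : EuclideanSpace ℝ (Fin 2)) : ℝ :=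
  ∫ t : ℝ, @inner ℝ _ _ (w (r • θ + t • perp2 θ)) (perp2 θ)

/-- The point `e^{ia} = (cos a, sin a)` of the unit circle in `ℝ²`. -/
def pointE (a : ℝ) : EuclideanSpace ℝ (Fin 2) :=
  (EuclideanSpace.equiv (Fin 2) ℝ).symm ![Real.cos a, Real.sin a]

lemma euclid_norm_sq (x : EuclideanSpace ℝ (Fin 2)) : ‖x‖ ^ 2 = x 0 ^ 2 + x 1 ^ 2 := by
  rw [EuclideanSpace.norm_eq, Real.sq_sqrt (by positivity)]
  simp [Fin.sum_univ_two, sq_abs]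

lemma cos_lip (a b : ℝ) : |Real.cos a - Real.cos b| ≤ |a - b| := by
  rw [Real.cos_sub_cos, abs_mul, abs_mul]
  have h1 := Real.abs_sin_le_abs (x := (a - b) / 2)
  have h2 := Real.abs_sin_le_one ((a + b) / 2)
  have h3 : |(a - b) / 2| = |a - b| / 2 := by rw [abs_div]; norm_num
  have h4 : |(-2 : ℝ)| = 2 := by norm_num
  rw [h4]
  nlinarith [abs_nonneg (Real.sin ((a + b) / 2)), abs_nonneg (Real.sin ((a - b) / 2)),
    abs_nonneg (a - b)]

lemma sin_lip (a b : ℝ) : |Real.sin a - Real.sin b| ≤ |a - b| := by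
  rw [Real.sin_sub_sin, abs_mul, abs_mul]
  have h1 := Real.abs_sin_le_abs (x := (a - b) / 2)
  have h2 := Real.abs_cos_le_one ((a + b) / 2)
  have h3 : |(a - b) / 2| = |a - b| / 2 := by rw [abs_div]; norm_num
  have h4 : |(2 : ℝ)| = 2 := by norm_num
  rw [h4]
  nlinarith [abs_nonneg (Real.cos ((a + b) / 2)), abs_nonneg (Real.sin ((a - b) / 2)),
    abs_nonneg (a - b)]

lemma pointE_lip : LipschitzWith 2 pointE := by
  refine LipschitzWith.of_dist_le_mul fun a b => ?_
  rw [EuclideanSpace.dist_eq]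
  have hc : dist (pointE a 0) (pointE b 0) = |Real.cos a - Real.cos b| := Real.dist_eq _ _
  have hs : dist (pointE a 1) (pointE b 1) = |Real.sin a - Real.sin b| := Real.dist_eq _ _
  rw [Fin.sum_univ_two, hc, hs]
  have h1 := cos_lip a b
  have h2 := sin_lip a b
  have hd : dist a b = |a - b| := Real.dist_eq a b
  have : Real.sqrt (|Real.cos a - Real.cos b| ^ 2 + |Real.sin a - Real.sin b| ^ 2)
      ≤ Real.sqrt ((2 * |a - b|) ^ 2) := by
    apply Real.sqrt_le_sqrt
    nlinarith [abs_nonneg (Real.cos a - Real.cos b), abs_nonneg (Real.sin a - Real.sin b),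
      abs_nonneg (a - b)]
  rw [Real.sqrt_sq (by positivity)] at this
  rw [hd]
  simpa using this

lemma sphere_subset_pointE :
    Metric.sphere (0 : EuclideanSpace ℝ (Fin 2)) 1 ⊆ pointE '' Set.Icc (-Real.pi) Real.pi := by
  intro x hx
  have hxn : ‖x‖ = 1 := mem_sphere_zero_iff_norm.1 hx
  set z : ℂ := ⟨x 0, x 1⟩ with hz
  have hsq : x 0 * x 0 + x 1 * x 1 = 1 := by
    have h := euclid_norm_sq x; rw [hxn] at h; nlinarith
  have habs : ‖z‖ = 1 := by
    rw [Complex.norm_def, Complex.normSq_mk, hsq, Real.sqrt_one]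
  have hz0 : z ≠ 0 := by
    intro h; rw [h] at habs; simp at habs
  refine ⟨Complex.arg z, ⟨(Complex.neg_pi_lt_arg z).le, Complex.arg_le_pi z⟩, ?_⟩
  ext i
  fin_cases i
  · show Real.cos (Complex.arg z) = x 0
    rw [Complex.cos_arg hz0, habs]; simp [hz]
  · show Real.sin (Complex.arg z) = x 1
    rw [Complex.sin_arg, habs]; simp [hz]

lemma sphere_hmeasure_le :
    μH[1] (Metric.sphere (0 : EuclideanSpace ℝ (Fin 2)) 1) ≤ ENNReal.ofReal (4 * Real.pi) := by
  calc μH[1] (Metric.sphere (0 : EuclideanSpace ℝ (Fin 2)) 1)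
      ≤ μH[1] (pointE '' Set.Icc (-Real.pi) Real.pi) := measure_mono sphere_subset_pointE
    _ ≤ ((2 : NNReal) : ℝ≥0∞) ^ (1 : ℝ) * μH[1] (Set.Icc (-Real.pi) Real.pi) :=
        pointE_lip.hausdorffMeasure_image_le zero_le_one _
    _ = ENNReal.ofReal (4 * Real.pi) := by
        rw [MeasureTheory.hausdorffMeasure_real, Real.volume_Icc, ENNReal.rpow_one]
        rw [show ((2 : NNReal) : ℝ≥0∞) = ENNReal.ofReal 2 by simp]
        rw [← ENNReal.ofReal_mul (by norm_num)]
        congr 1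
        ring

lemma rot_measurePreserving (θ : EuclideanSpace ℝ (Fin 2)) (hθ : θ 0 ^ 2 + θ 1 ^ 2 = 1) :
    MeasurePreserving (fun z : ℝ × ℝ => z.1 • θ + z.2 • perp2 θ) volume volume := by
  have m0 : MeasurePreserving (MeasurableEquiv.finTwoArrow.symm : ℝ × ℝ ≃ᵐ (Fin 2 → ℝ))
      volume volume := (volume_preserving_finTwoArrow ℝ).symm _
  set A : Matrix (Fin 2) (Fin 2) ℝ := Matrix.of ![![θ 0, -θ 1], ![θ 1, θ 0]] with hA
  have hdet : A.det = 1 := by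
    rw [Matrix.det_fin_two]
    show θ 0 * θ 0 - -θ 1 * θ 1 = 1
    nlinarith
  have m1 : MeasurePreserving (Matrix.toLin' A) volume volume := by
    refine ⟨(Matrix.toLin' A).continuous_of_finiteDimensional.measurable, ?_⟩
    rw [Real.map_matrix_volume_pi_eq_smul_volume_pi (by rw [hdet]; norm_num), hdet]
    norm_num
  have m2 : MeasurePreserving ((MeasurableEquiv.toLp 2 (Fin 2 → ℝ)) : (Fin 2 → ℝ) ≃ᵐ _)
      volume volume := (EuclideanSpace.volume_preserving_symm_measurableEquiv_toLp (Fin 2)).symm _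
  have hcomp := (m2.comp m1).comp m0
  have heq : (fun z : ℝ × ℝ => z.1 • θ + z.2 • perp2 θ) =
      (⇑(MeasurableEquiv.toLp 2 (Fin 2 → ℝ)) ∘ ⇑(Matrix.toLin' A) ∘
        ⇑(MeasurableEquiv.finTwoArrow.symm : ℝ × ℝ ≃ᵐ (Fin 2 → ℝ))) := by
    funext z
    ext i
    show (z.1 • θ + z.2 • perp2 θ) i = _
    have hm : (MeasurableEquiv.finTwoArrow.symm : ℝ × ℝ ≃ᵐ (Fin 2 → ℝ)) z = ![z.1, z.2] := rfl
    simp only [Function.comp_apply, hm]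
    have he : ∀ y : Fin 2 → ℝ, ((MeasurableEquiv.toLp 2 (Fin 2 → ℝ)) y : EuclideanSpace ℝ (Fin 2)) i = y i := fun y => rfl
    rw [he]
    rw [Matrix.toLin'_apply]
    fin_cases i
    · show z.1 * θ 0 + z.2 * (-θ 1) = A.mulVec ![z.1, z.2] 0
      simp [hA, Matrix.mulVec, dotProduct, Fin.sum_univ_two]
      ring
    · show z.1 * θ 1 + z.2 * θ 0 = A.mulVec ![z.1, z.2] 1
      simp [hA, Matrix.mulVec, dotProduct, Fin.sum_univ_two]
      ring
  rw [heq]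
  exact hcomp

lemma holder_pow {p : ℝ} (hp : 1 < p) {R : ℝ} (hR : 0 < R) (g : ℝ → ℝ≥0∞)
    (hg : Measurable g) (hgz : ∀ t ∉ Set.Ioo (-R) R, g t = 0) :
    (∫⁻ t, g t) ^ p ≤ ENNReal.ofReal ((2 * R) ^ (p - 1)) * ∫⁻ t, g t ^ p := by
  have hp0 : (0 : ℝ) < p := lt_trans one_pos hp
  set q := Real.conjExponent p with hq
  have hpq : p.HolderConjugate q := Real.HolderConjugate.conjExponent hp
  set s := Set.Ioo (-R) R with hs
  have h1 : ∫⁻ t, g t = ∫⁻ t in s, g t := by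
    rw [← lintegral_indicator measurableSet_Ioo g]
    refine lintegral_congr fun t => ?_
    by_cases ht : t ∈ s
    · rw [Set.indicator_of_mem ht]
    · rw [Set.indicator_of_notMem ht, hgz t ht]
  have hvol : volume s = ENNReal.ofReal (2 * R) := by
    rw [hs, Real.volume_Ioo]
    congr 1; ring
  have h2 : ∫⁻ t in s, g t ≤
      (∫⁻ t in s, g t ^ p) ^ (1 / p) * ENNReal.ofReal (2 * R) ^ (1 / q) := by
    have hH := ENNReal.lintegral_mul_le_Lp_mul_Lq (volume.restrict s) hpq hg.aemeasurable
      (aemeasurable_const (b := (1 : ℝ≥0∞)))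
    simp only [Pi.mul_apply, mul_one, ENNReal.one_rpow, lintegral_const, one_mul,
      Measure.restrict_apply_univ] at hH
    rwa [hvol] at hH
  have h3 : (∫⁻ t in s, g t) ^ p ≤
      (∫⁻ t in s, g t ^ p) * ENNReal.ofReal (2 * R) ^ (p / q) := by
    have h := ENNReal.rpow_le_rpow h2 hp0.le
    rwa [ENNReal.mul_rpow_of_nonneg _ _ hp0.le, ← ENNReal.rpow_mul, ← ENNReal.rpow_mul,
      one_div_mul_cancel hp0.ne', ENNReal.rpow_one, show 1 / q * p = p / q by ring] at h
  have hq1 : p / q = p - 1 := by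
    rw [hq, Real.conjExponent]
    field_simp
  rw [h1]
  calc (∫⁻ t in s, g t) ^ p ≤ (∫⁻ t in s, g t ^ p) * ENNReal.ofReal (2 * R) ^ (p / q) := h3
    _ = ENNReal.ofReal ((2 * R) ^ (p - 1)) * ∫⁻ t in s, g t ^ p := by
        rw [hq1, ENNReal.ofReal_rpow_of_pos (by linarith), mul_comm]
    _ ≤ ENNReal.ofReal ((2 * R) ^ (p - 1)) * ∫⁻ t, g t ^ p := by
        exact mul_le_mul_right (setLIntegral_le_lintegral s _) _

/-- the 2D ray transform maps `L^p(Ω;ℝ²)` into `L^p(Σ;ℝ)` with a norm bound. -/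
theorem ray_lp_bound (p : ℝ) (hp : 1 < p) (R : ℝ) (hR : 0 < R)
    (Ω : Set (EuclideanSpace ℝ (Fin 2))) (hΩne : Ω.Nonempty)
    (hΩbd : Bornology.IsBounded Ω) (hΩop : IsOpen Ω)
    (hΩR : Ω ⊆ Metric.ball (0 : EuclideanSpace ℝ (Fin 2)) R) :
    ∃ C : ℝ, 0 < C ∧
      ∀ w : EuclideanSpace ℝ (Fin 2) → EuclideanSpace ℝ (Fin 2), Measurable w →
        (∀ x ∉ Ω, w x = 0) → lpPow p Ω w < ⊤ →
          sigmaLpPow p (fun r θ => rayT w r θ) < ⊤ ∧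
            sigmaLpPow p (fun r θ => rayT w r θ) ≤ ENNReal.ofReal C * lpPow p Ω w := by
  have hp0 : (0 : ℝ) < p := lt_trans one_pos hp
  refine ⟨(2 * R) ^ (p - 1) * (4 * Real.pi), by positivity, fun w hw hw0 hwlt => ?_⟩
  set u : EuclideanSpace ℝ (Fin 2) → ℝ≥0∞ := fun x => (‖w x‖₊ : ℝ≥0∞) ^ p with hu
  have humeas : Measurable u :=
    ENNReal.continuous_rpow_const.measurable.comp (measurable_coe_nnreal_ennreal.comp hw.nnnorm)
  have hI : ∫⁻ x, u x = lpPow p Ω w := by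
    rw [lpPow, ← lintegral_indicator hΩop.measurableSet]
    refine lintegral_congr fun x => ?_
    by_cases hx : x ∈ Ω
    · rw [Set.indicator_of_mem hx]
    · rw [Set.indicator_of_notMem hx, hu]
      simp [hw0 x hx, ENNReal.zero_rpow_of_pos hp0]
  have key : ∀ θ ∈ Metric.sphere (0 : EuclideanSpace ℝ (Fin 2)) 1,
      (∫⁻ r in Set.Ici (0 : ℝ), (‖rayT w r θ‖₊ : ℝ≥0∞) ^ p) ≤
        ENNReal.ofReal ((2 * R) ^ (p - 1)) * lpPow p Ω w := by
    intro θ hθ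
    have hθn : ‖θ‖ = 1 := mem_sphere_zero_iff_norm.1 hθ
    have hθs : θ 0 ^ 2 + θ 1 ^ 2 = 1 := by
      have h := euclid_norm_sq θ; rw [hθn] at h; linarith
    have hperp1 : perp2 θ 0 = -θ 1 := rfl
    have hperp2 : perp2 θ 1 = θ 0 := rfl
    have hperp : ‖perp2 θ‖ = 1 := by
      have h := euclid_norm_sq (perp2 θ)
      rw [hperp1, hperp2] at h
      nlinarith [norm_nonneg (perp2 θ)]
    set T : ℝ → ℝ → EuclideanSpace ℝ (Fin 2) := fun r t => r • θ + t • perp2 θ with hT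
    have hTcoord : ∀ r t : ℝ, (T r t) 0 = r * θ 0 - t * θ 1 ∧ (T r t) 1 = r * θ 1 + t * θ 0 := by
      intro r t
      constructor
      · show (r • θ + t • perp2 θ) 0 = _
        simp only [PiLp.add_apply, PiLp.smul_apply, smul_eq_mul, hperp1]
        ring
      · show (r • θ + t • perp2 θ) 1 = _
        simp only [PiLp.add_apply, PiLp.smul_apply, smul_eq_mul, hperp2]
    have hTcont : ∀ r : ℝ, Continuous (fun t => T r t) := fun r => show Continuous (fun t : ℝ => r • θ + t • perp2 θ) from
      by fun_prop
    have hsupp : ∀ r t : ℝ, t ∉ Set.Ioo (-R) R → w (T r t) = 0 := by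
      intro r t ht
      apply hw0
      intro hmem
      have hball : ‖T r t‖ < R := mem_ball_zero_iff.1 (hΩR hmem)
      have h1 : ‖T r t‖ ^ 2 = r ^ 2 + t ^ 2 := by
        rw [euclid_norm_sq, (hTcoord r t).1, (hTcoord r t).2]
        nlinarith [hθs]
      have h2 : R ≤ |t| := by
        simp only [Set.mem_Ioo, not_and_or, not_lt] at ht
        rcases ht with h | h
        · rw [abs_of_nonpos (by linarith)]; linarith
        · rw [abs_of_nonneg (by linarith)]; linarith
      nlinarith [norm_nonneg (T r t), sq_abs t, abs_nonneg t]
    have hA : ∀ r : ℝ, (‖rayT w r θ‖₊ : ℝ≥0∞) ≤ ∫⁻ t, (‖w (T r t)‖₊ : ℝ≥0∞) := by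
      intro r
      refine le_trans (enorm_integral_le_lintegral_enorm _) (lintegral_mono fun t => ?_)
      have hle : ‖@inner ℝ _ _ (w (T r t)) (perp2 θ)‖₊ ≤ ‖w (T r t)‖₊ * ‖perp2 θ‖₊ :=
        nnnorm_inner_le_nnnorm _ _
      have hp1 : ‖perp2 θ‖₊ = 1 := by
        rw [← NNReal.coe_eq_one, coe_nnnorm]; exact hperp
      rw [hp1, mul_one] at hle
      exact ENNReal.coe_le_coe.2 hle
    have hB : ∀ r : ℝ, (∫⁻ t, (‖w (T r t)‖₊ : ℝ≥0∞)) ^ p ≤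
        ENNReal.ofReal ((2 * R) ^ (p - 1)) * ∫⁻ t, u (T r t) := by
      intro r
      refine holder_pow hp hR _ ?_ ?_
      · exact measurable_coe_nnreal_ennreal.comp (hw.comp (hTcont r).measurable).nnnorm
      · intro t ht
        simp [hsupp r t ht]
    have hD : (∫⁻ r, ∫⁻ t, u (T r t)) = ∫⁻ x, u x := by
      have hMP : MeasurePreserving (fun z : ℝ × ℝ => T z.1 z.2) volume volume :=
        rot_measurePreserving θ hθs
      have hTm : Measurable (fun z : ℝ × ℝ => T z.1 z.2) := hMP.measurable
      rw [show (∫⁻ r, ∫⁻ t, u (T r t)) = ∫⁻ z in Set.univ, u (T z.1 z.2)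
            ∂(volume : Measure (ℝ × ℝ)) from ?_, Measure.restrict_univ]
      · exact hMP.lintegral_comp humeas
      · rw [Measure.restrict_univ, Measure.volume_eq_prod ℝ ℝ,
          lintegral_prod (fun z : ℝ × ℝ => u (T z.1 z.2)) (humeas.comp hTm).aemeasurable]
    calc ∫⁻ r in Set.Ici (0 : ℝ), (‖rayT w r θ‖₊ : ℝ≥0∞) ^ p
        ≤ ∫⁻ r in Set.Ici (0 : ℝ),
            ENNReal.ofReal ((2 * R) ^ (p - 1)) * ∫⁻ t, u (T r t) := by
          refine lintegral_mono fun r => ?_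
          exact le_trans (ENNReal.rpow_le_rpow (hA r) hp0.le) (hB r)
      _ ≤ ∫⁻ r, ENNReal.ofReal ((2 * R) ^ (p - 1)) * ∫⁻ t, u (T r t) :=
          setLIntegral_le_lintegral _ _
      _ = ENNReal.ofReal ((2 * R) ^ (p - 1)) * ∫⁻ r, ∫⁻ t, u (T r t) :=
          lintegral_const_mul' _ _ ENNReal.ofReal_ne_top
      _ = ENNReal.ofReal ((2 * R) ^ (p - 1)) * lpPow p Ω w := by rw [hD, hI]
  have h21 : ((2 : ℕ) : ℝ) - 1 = (1 : ℝ) := by norm_num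
  have hbound : sigmaLpPow p (fun r θ => rayT w r θ) ≤
      ENNReal.ofReal ((2 * R) ^ (p - 1) * (4 * Real.pi)) * lpPow p Ω w := by
    rw [sigmaLpPow, h21]
    calc (∫⁻ φ in Metric.sphere (0 : EuclideanSpace ℝ (Fin 2)) 1,
            ∫⁻ r in Set.Ici (0 : ℝ), (‖rayT w r φ‖₊ : ℝ≥0∞) ^ p ∂volume ∂μH[1])
        ≤ ∫⁻ _ in Metric.sphere (0 : EuclideanSpace ℝ (Fin 2)) 1,
            ENNReal.ofReal ((2 * R) ^ (p - 1)) * lpPow p Ω w ∂μH[1] :=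
          setLIntegral_mono measurable_const key
      _ = ENNReal.ofReal ((2 * R) ^ (p - 1)) * lpPow p Ω w *
            μH[1] (Metric.sphere (0 : EuclideanSpace ℝ (Fin 2)) 1) := setLIntegral_const _ _
      _ ≤ ENNReal.ofReal ((2 * R) ^ (p - 1)) * lpPow p Ω w * ENNReal.ofReal (4 * Real.pi) :=
          mul_le_mul_right sphere_hmeasure_le _
      _ = ENNReal.ofReal ((2 * R) ^ (p - 1) * (4 * Real.pi)) * lpPow p Ω w := by
          rw [ENNReal.ofReal_mul (by positivity : (0:ℝ) ≤ (2 * R) ^ (p - 1)),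
            ENNReal.ofReal_mul (by norm_num : (0:ℝ) ≤ 4)]
          ring
  exact ⟨lt_of_le_of_lt hbound (ENNReal.mul_lt_top ENNReal.ofReal_lt_top hwlt), hbound⟩
end
end

section
/- Suppose there exists a solution of R[w] = v⁰ in W^{s,p}(Ω;K), i.e. some w ∈ W^{s,p}(Ω;K) with R[w] = v⁰ in L^p(Σ;ℝ^m). Then there exists a Φ_d^l-minimizing solution, i.e. an element w* ∈ W^{s,p}(Ω;K) with R[w*] = v⁰ and Φ_d^l(w*) = inf{Φ_d^l(w) : w ∈ W^{s,p}(Ω;K), R[w] = v⁰}. -/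
open MeasureTheory Metric Set Filter ENNReal

noncomputable section

/-- `w` solves `R[w] = v⁰` a.e. on `Σ = [0,∞) × S^{n-1}`. -/
def IsRadonSol {n m : ℕ} (w : EuclideanSpace ℝ (Fin n) → EuclideanSpace ℝ (Fin m))
    (v0 : ℝ → EuclideanSpace ℝ (Fin n) → EuclideanSpace ℝ (Fin m)) : Prop :=
  ∀ᵐ φ ∂((μH[(n : ℝ) - 1] : Measure (EuclideanSpace ℝ (Fin n))).restrict
      (Metric.sphere (0 : EuclideanSpace ℝ (Fin n)) 1)),
    ∀ᵐ r ∂(volume.restrict (Set.Ici (0 : ℝ))), radonT w r φ = v0 r φ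

/-- Admissible functions: elements of `W^{s,p}(Ω;K)`, identified with their extension
by zero outside `Ω`. -/
def Adm {n m : ℕ} (p s : ℝ) (Ω : Set (EuclideanSpace ℝ (Fin n)))
    (K : Set (EuclideanSpace ℝ (Fin m)))
    (w : EuclideanSpace ℝ (Fin n) → EuclideanSpace ℝ (Fin m)) : Prop :=
  Measurable w ∧ (∀ x ∉ Ω, w x = 0) ∧ MemWsp p s Ω K w

/-- The Tikhonov functional `F^{α,v}` for the Radon transform. -/
def TikhonovR {n m : ℕ} (p s : ℝ) (l : ℕ) (Ω : Set (EuclideanSpace ℝ (Fin n)))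
    (ρ : EuclideanSpace ℝ (Fin n) → ℝ)
    (d : EuclideanSpace ℝ (Fin m) → EuclideanSpace ℝ (Fin m) → ℝ) (α : ℝ)
    (v : ℝ → EuclideanSpace ℝ (Fin n) → EuclideanSpace ℝ (Fin m))
    (w : EuclideanSpace ℝ (Fin n) → EuclideanSpace ℝ (Fin m)) : ℝ≥0∞ :=
  (∫⁻ φ in Metric.sphere (0 : EuclideanSpace ℝ (Fin n)) 1,
      ∫⁻ r in Set.Ici (0 : ℝ), (‖radonT w r φ - v r φ‖₊ : ℝ≥0∞) ^ p ∂volume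
        ∂μH[(n : ℝ) - 1]) +
    ENNReal.ofReal α * PhiReg p s l Ω ρ d w


open Measure FourierTransform RealInnerProductSpace

namespace RadonNS

lemma pi_hausdorff (k : ℕ) : (μH[(k : ℝ)] : Measure (Fin k → ℝ)) = volume := by
  simpa using (hausdorffMeasure_pi_real (ι := Fin k))

lemma volume_le_hausdorff (k : ℕ) :
    (volume : Measure (EuclideanSpace ℝ (Fin k))) ≤ μH[(k : ℝ)] := by
  rw [Measure.le_iff]
  intro S hS
  set f := ⇑(WithLp.equiv 2 (Fin k → ℝ)) with hf
  have hS' : MeasurableSet (((MeasurableEquiv.toLp 2 (Fin k → ℝ)).symm) '' S) :=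
    ((MeasurableEquiv.toLp 2 (Fin k → ℝ)).symm).measurableSet_image.2 hS
  have h1 : volume S = volume (((MeasurableEquiv.toLp 2 (Fin k → ℝ)).symm) '' S) := by
    rw [← (EuclideanSpace.volume_preserving_symm_measurableEquiv_toLp (Fin k)).measure_preimage
      hS'.nullMeasurableSet, Set.preimage_image_eq _ ((MeasurableEquiv.toLp 2 (Fin k → ℝ)).symm).injective]
  have h2 : ((MeasurableEquiv.toLp 2 (Fin k → ℝ)).symm) '' S = f '' S := by
    rw [hf]; rfl
  have h3 : μH[(k : ℝ)] (f '' S) ≤ μH[(k : ℝ)] S := by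
    simpa [hf] using (PiLp.lipschitzWith_ofLp 2 (fun _ : Fin k => ℝ)).hausdorffMeasure_image_le
      (by positivity : (0:ℝ) ≤ (k:ℝ)) S
  calc volume S = volume (f '' S) := by rw [h1, h2]
    _ = μH[(k : ℝ)] (f '' S) := by rw [pi_hausdorff k]
    _ ≤ μH[(k : ℝ)] S := h3

lemma hausdorff_le_volume (k : ℕ) : ∃ C : ℝ≥0∞, C ≠ ⊤ ∧
    ∀ S : Set (EuclideanSpace ℝ (Fin k)), MeasurableSet S → μH[(k : ℝ)] S ≤ C * volume S := by
  set K : NNReal := (Fintype.card (Fin k) : NNReal) ^ ((1:ℝ≥0∞)/2).toReal with hK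
  refine ⟨(K : ℝ≥0∞) ^ (k:ℝ), ENNReal.rpow_ne_top_of_nonneg (by positivity) coe_ne_top, ?_⟩
  intro S hS
  set f := ⇑(WithLp.equiv 2 (Fin k → ℝ)) with hf
  have halip : AntilipschitzWith K f := by
    rw [hK]; exact PiLp.antilipschitzWith_ofLp 2 (fun _ : Fin k => ℝ)
  have h3 : μH[(k : ℝ)] S ≤ (K : ℝ≥0∞) ^ (k:ℝ) * μH[(k : ℝ)] (f '' S) :=
    halip.le_hausdorffMeasure_image (by positivity) S
  have hS' : MeasurableSet (((MeasurableEquiv.toLp 2 (Fin k → ℝ)).symm) '' S) :=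
    ((MeasurableEquiv.toLp 2 (Fin k → ℝ)).symm).measurableSet_image.2 hS
  have h1 : volume S = volume (((MeasurableEquiv.toLp 2 (Fin k → ℝ)).symm) '' S) := by
    rw [← (EuclideanSpace.volume_preserving_symm_measurableEquiv_toLp (Fin k)).measure_preimage
      hS'.nullMeasurableSet, Set.preimage_image_eq _ ((MeasurableEquiv.toLp 2 (Fin k → ℝ)).symm).injective]
  have h2 : ((MeasurableEquiv.toLp 2 (Fin k → ℝ)).symm) '' S = f '' S := by
    rw [hf]; rfl
  rw [pi_hausdorff k] at h3
  rw [h1, h2]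
  exact h3


instance hmeas_inv (k : ℕ) :
    IsAddLeftInvariant (μH[(k : ℝ)] : Measure (EuclideanSpace ℝ (Fin k))) := by
  constructor
  intro g
  have hiso : Isometry (fun x : EuclideanSpace ℝ (Fin k) => g + x) := isometry_add_left g
  have hsurj : Function.Surjective (fun x : EuclideanSpace ℝ (Fin k) => g + x) :=
    (Equiv.addLeft g).surjective
  rw [hiso.map_hausdorffMeasure (Or.inr hsurj), hsurj.range_eq, Measure.restrict_univ]

instance hmeas_fc (k : ℕ) :
    IsFiniteMeasureOnCompacts (μH[(k : ℝ)] : Measure (EuclideanSpace ℝ (Fin k))) := by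
  obtain ⟨C, hC, hle⟩ := hausdorff_le_volume k
  constructor
  intro K hK
  calc μH[(k : ℝ)] K ≤ C * volume K := hle K hK.measurableSet
    _ < ⊤ := ENNReal.mul_lt_top hC.lt_top hK.measure_lt_top

lemma hausdorff_eq_smul_volume (k : ℕ) : ∃ c : ℝ≥0∞, 1 ≤ c ∧ c ≠ ⊤ ∧
    (μH[(k : ℝ)] : Measure (EuclideanSpace ℝ (Fin k))) = c • volume := by
  have h := Measure.isAddLeftInvariant_eq_smul (μH[(k : ℝ)] : Measure (EuclideanSpace ℝ (Fin k)))
    volume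
  set c0 : NNReal := Measure.addHaarScalarFactor (μH[(k : ℝ)] : Measure (EuclideanSpace ℝ (Fin k))) volume
  refine ⟨(c0 : ℝ≥0∞), ?_, coe_ne_top, by rw [h, ENNReal.smul_def]⟩
  -- 1 ≤ c0 from volume ≤ μH on a ball
  have hb := volume_le_hausdorff k (Metric.ball (0 : EuclideanSpace ℝ (Fin k)) 1)
  rw [h] at hb
  have hpos : 0 < volume (Metric.ball (0 : EuclideanSpace ℝ (Fin k)) 1) :=
    Metric.measure_ball_pos _ _ one_pos
  have hne : volume (Metric.ball (0 : EuclideanSpace ℝ (Fin k)) 1) ≠ ⊤ :=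
    measure_ball_lt_top.ne
  have : (1:ℝ≥0∞) * volume (Metric.ball (0 : EuclideanSpace ℝ (Fin k)) 1) ≤
      (c0 : ℝ≥0∞) * volume (Metric.ball (0 : EuclideanSpace ℝ (Fin k)) 1) := by
    simpa only [one_mul, Measure.smul_apply, ENNReal.smul_def, smul_eq_mul] using hb
  exact (ENNReal.mul_le_mul_iff_left hpos.ne' hne).1 this



def sliceEmb (k : ℕ) (r : ℝ) (y : EuclideanSpace ℝ (Fin k)) : EuclideanSpace ℝ (Fin (k+1)) :=
  (WithLp.equiv 2 _).symm (Fin.cons r ((WithLp.equiv 2 _) y))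

lemma sliceEmb_def (k : ℕ) (r : ℝ) (y : EuclideanSpace ℝ (Fin k)) :
    sliceEmb k r y = (WithLp.equiv 2 _).symm (Fin.cons r ((WithLp.equiv 2 _) y)) := rfl

lemma sliceEmb_apply_zero (k : ℕ) (r : ℝ) (y : EuclideanSpace ℝ (Fin k)) :
    sliceEmb k r y 0 = r := rfl

lemma sliceEmb_isometry (k : ℕ) (r : ℝ) : Isometry (sliceEmb k r) := by
  intro y z
  rw [edist_dist, edist_dist]
  congr 1
  rw [EuclideanSpace.dist_eq, EuclideanSpace.dist_eq]
  congr 1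
  rw [Fin.sum_univ_succ]
  simp [sliceEmb]

lemma sliceEmb_range (k : ℕ) (r : ℝ) :
    Set.range (sliceEmb k r) = {x : EuclideanSpace ℝ (Fin (k+1)) | x 0 = r} := by
  ext x
  constructor
  · rintro ⟨y, rfl⟩; exact rfl
  · intro hx
    refine ⟨(WithLp.equiv 2 _).symm (Fin.tail ((WithLp.equiv 2 _) x)), ?_⟩
    simp only [sliceEmb]
    have : Fin.cons (x 0) (Fin.tail ((WithLp.equiv 2 _) x)) = (WithLp.equiv 2 _) x :=
      Fin.cons_self_tail _
    rw [← hx] at *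
    exact congrArg (WithLp.equiv 2 _).symm this

lemma sliceEmb_measurable (k : ℕ) (r : ℝ) : Measurable (sliceEmb k r) :=
  (sliceEmb_isometry k r).continuous.measurable

lemma sliceProd_measurePreserving (k : ℕ) :
    MeasurePreserving (fun p : ℝ × EuclideanSpace ℝ (Fin k) => sliceEmb k p.1 p.2)
      (volume.prod volume) volume := by
  have h1 : MeasurePreserving
      (Prod.map (id : ℝ → ℝ) (⇑((MeasurableEquiv.toLp 2 (Fin k → ℝ)).symm)))
      (volume.prod volume) (volume.prod volume) :=
    (MeasurePreserving.id volume).prod (EuclideanSpace.volume_preserving_symm_measurableEquiv_toLp (Fin k))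
  have h2 : MeasurePreserving (⇑(MeasurableEquiv.piFinSuccAbove (fun _ : Fin (k+1) => ℝ) 0).symm)
      (volume.prod volume) volume :=
    (volume_preserving_piFinSuccAbove (fun _ : Fin (k+1) => ℝ) 0).symm
  have h3 : MeasurePreserving (⇑((MeasurableEquiv.toLp 2 (Fin (k+1) → ℝ)).symm).symm)
      volume volume :=
    (EuclideanSpace.volume_preserving_symm_measurableEquiv_toLp (Fin (k+1))).symm
  have comp := (h3.comp h2).comp h1
  convert comp using 1
  funext p
  show sliceEmb k p.1 p.2 = ((MeasurableEquiv.toLp 2 (Fin (k+1) → ℝ)).symm).symm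
    ((MeasurableEquiv.piFinSuccAbove (fun _ : Fin (k+1) => ℝ) 0).symm
      (p.1, ((MeasurableEquiv.toLp 2 (Fin k → ℝ)).symm) p.2))
  simp only [MeasurableEquiv.piFinSuccAbove, MeasurableEquiv.symm_mk, MeasurableEquiv.coe_mk,
    MeasurableEquiv.piFinSuccAbove_symm_apply]
  show _ = (WithLp.equiv 2 (Fin (k+1) → ℝ)).symm _
  simp only [sliceEmb]
  congr 1
  funext i
  induction i using Fin.cases with
  | zero => simp
  | succ j => simp [Fin.insertNth_zero]



lemma hyperplane_integral (k : ℕ) {G : Type*} [NormedAddCommGroup G] [NormedSpace ℝ G]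
    (c : ℝ≥0∞) (hc : (μH[(k:ℝ)] : Measure (EuclideanSpace ℝ (Fin k))) = c • volume)
    (U : EuclideanSpace ℝ (Fin (k+1)) ≃ₗᵢ[ℝ] EuclideanSpace ℝ (Fin (k+1)))
    (w : EuclideanSpace ℝ (Fin (k+1)) → G) (hw : StronglyMeasurable w) (r : ℝ) :
    ∫ x in {x : EuclideanSpace ℝ (Fin (k+1)) |
        @inner ℝ _ _ x (U (EuclideanSpace.single 0 1)) = r}, w x ∂μH[(k:ℝ)] =
      c.toReal • ∫ y, w (U (sliceEmb k r y)) := by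
  set φ := U (EuclideanSpace.single (0 : Fin (k+1)) (1:ℝ)) with hφ
  set S := {x : EuclideanSpace ℝ (Fin (k+1)) | @inner ℝ _ _ x φ = r} with hSdef
  have hScl : IsClosed S := isClosed_eq (continuous_id.inner continuous_const) continuous_const
  have hSmeas : MeasurableSet S := hScl.measurableSet
  have hpre : ⇑U ⁻¹' S = {x : EuclideanSpace ℝ (Fin (k+1)) | x 0 = r} := by
    ext x
    simp only [Set.mem_preimage, hSdef, Set.mem_setOf_eq, hφ]
    rw [LinearIsometryEquiv.inner_map_map, EuclideanSpace.inner_single_right]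
    simp
  have hres : (μH[(k:ℝ)] : Measure (EuclideanSpace ℝ (Fin (k+1)))).restrict S =
      c • Measure.map (fun y => U (sliceEmb k r y)) volume := by
    calc (μH[(k:ℝ)] : Measure (EuclideanSpace ℝ (Fin (k+1)))).restrict S
        = (Measure.map (⇑U) μH[(k:ℝ)]).restrict S := by
          rw [U.isometry.map_hausdorffMeasure (Or.inr U.surjective),
            U.surjective.range_eq, Measure.restrict_univ]
      _ = Measure.map (⇑U) (μH[(k:ℝ)].restrict (⇑U ⁻¹' S)) :=
          Measure.restrict_map U.continuous.measurable hSmeas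
      _ = Measure.map (⇑U) (Measure.map (sliceEmb k r) μH[(k:ℝ)]) := by
          rw [(sliceEmb_isometry k r).map_hausdorffMeasure (Or.inl (by positivity)),
            sliceEmb_range k r, hpre]
      _ = Measure.map (⇑U) (Measure.map (sliceEmb k r) (c • volume)) := by rw [hc]
      _ = c • Measure.map (⇑U) (Measure.map (sliceEmb k r) volume) := by
          rw [Measure.map_smul, Measure.map_smul]
      _ = c • Measure.map (fun y => U (sliceEmb k r y)) volume := by
          rw [Measure.map_map U.continuous.measurable (sliceEmb_isometry k r).continuous.measurable]
          rfl
  rw [hres, integral_smul_measure]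
  congr 1
  exact integral_map (U.continuous.measurable.comp
    (sliceEmb_isometry k r).continuous.measurable).aemeasurable
    hw.aestronglyMeasurable



lemma euclid_norm_sq (k : ℕ) (z : EuclideanSpace ℝ (Fin k)) :
    ‖z‖ = Real.sqrt (∑ i, z i ^ 2) := by
  rw [EuclideanSpace.norm_eq]
  congr 1
  exact Finset.sum_congr rfl fun i _ => by rw [Real.norm_eq_abs, sq_abs]

lemma euclid_dist_sq (k : ℕ) (x z : EuclideanSpace ℝ (Fin k)) :
    dist x z = Real.sqrt (∑ i, (x i - z i) ^ 2) := by
  rw [EuclideanSpace.dist_eq]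
  congr 1
  exact Finset.sum_congr rfl fun i _ => by rw [Real.dist_eq, sq_abs]

lemma tail_lipschitz (k : ℕ) : LipschitzWith 1
    (fun x : EuclideanSpace ℝ (Fin (k+1)) =>
      ((WithLp.equiv 2 _).symm (Fin.tail ((WithLp.equiv 2 _) x)) : EuclideanSpace ℝ (Fin k))) := by
  apply LipschitzWith.of_dist_le_mul
  intro x y
  simp only [NNReal.coe_one, one_mul]
  rw [euclid_dist_sq, euclid_dist_sq]
  apply Real.sqrt_le_sqrt
  rw [Fin.sum_univ_succ (f := fun i => (x i - y i) ^ 2)]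
  have h0 : (0:ℝ) ≤ (x 0 - y 0) ^ 2 := sq_nonneg _
  have h2 : ∑ i : Fin k, (((WithLp.equiv 2 _).symm (Fin.tail ((WithLp.equiv 2 _) x)) : EuclideanSpace ℝ (Fin k)) i -
      ((WithLp.equiv 2 _).symm (Fin.tail ((WithLp.equiv 2 _) y)) : EuclideanSpace ℝ (Fin k)) i) ^ 2
      = ∑ i : Fin k, (x i.succ - y i.succ) ^ 2 := rfl
  rw [h2]
  linarith

lemma exists_rot (k : ℕ) (ψ : EuclideanSpace ℝ (Fin (k+1))) (hψ : ‖ψ‖ = 1) :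
    ∃ U : EuclideanSpace ℝ (Fin (k+1)) ≃ₗᵢ[ℝ] EuclideanSpace ℝ (Fin (k+1)),
      U (EuclideanSpace.single 0 1) = ψ := by
  have hcard : Module.finrank ℝ (EuclideanSpace ℝ (Fin (k+1))) = Fintype.card (Fin (k+1)) := by
    simp [finrank_euclideanSpace_fin]
  have horth : Orthonormal ℝ (({0} : Set (Fin (k+1))).restrict (fun _ => ψ)) := by
    constructor
    · intro i; exact hψ
    · intro i j hij
      exact absurd (Subtype.ext (by
        have hi := i.2; have hj := j.2
        simp only [Set.mem_singleton_iff] at hi hj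
        rw [hi, hj])) hij
  obtain ⟨b, hb⟩ := horth.exists_orthonormalBasis_extension_of_card_eq hcard
  exact ⟨b.repr.symm, by rw [b.repr_symm_single, hb 0 rfl]⟩

lemma cap_pos_e (k : ℕ) {δ : ℝ} (hδ : 0 < δ) :
    0 < μH[(k:ℝ)] (Metric.sphere (0 : EuclideanSpace ℝ (Fin (k+1))) 1 ∩
      Metric.ball (EuclideanSpace.single 0 1) δ) := by
  set δ' := min (δ/2) (1/2) with hδ'
  have hδ'pos : 0 < δ' := lt_min (by linarith) (by norm_num)
  have hδ'le : δ' ≤ δ/2 := min_le_left _ _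
  have hδ'le2 : δ' ≤ 1/2 := min_le_right _ _
  have hsub : Metric.ball (0 : EuclideanSpace ℝ (Fin k)) δ' ⊆
      (fun x : EuclideanSpace ℝ (Fin (k+1)) =>
        ((WithLp.equiv 2 _).symm (Fin.tail ((WithLp.equiv 2 _) x)) : EuclideanSpace ℝ (Fin k))) ''
      (Metric.sphere (0 : EuclideanSpace ℝ (Fin (k+1))) 1 ∩
        Metric.ball (EuclideanSpace.single 0 1) δ) := by
    intro y hy
    rw [Metric.mem_ball, dist_zero_right] at hy
    have hynn : 0 ≤ ‖y‖ := norm_nonneg y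
    have hy1 : ‖y‖ < 1 := by
      calc ‖y‖ < δ' := hy
        _ ≤ 1/2 := hδ'le2
        _ < 1 := by norm_num
    have hy2 : ‖y‖^2 < 1 := by nlinarith
    set t := Real.sqrt (1 - ‖y‖^2) with ht
    have ht0 : 0 ≤ t := Real.sqrt_nonneg _
    have htsq : t^2 = 1 - ‖y‖^2 := Real.sq_sqrt (by nlinarith)
    have ht1 : t ≤ 1 := by nlinarith
    have hysum : ∑ i : Fin k, (y i)^2 = ‖y‖^2 := by
      rw [euclid_norm_sq, Real.sq_sqrt (Finset.sum_nonneg fun i _ => sq_nonneg _)]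
    refine ⟨sliceEmb k t y, ⟨?_, ?_⟩, ?_⟩
    · rw [Metric.mem_sphere, dist_zero_right, euclid_norm_sq]
      have hs : ∑ i, (sliceEmb k t y i)^2 = t^2 + ∑ i : Fin k, (y i)^2 := by
        rw [sliceEmb_def, Fin.sum_univ_succ]; rfl
      rw [hs, hysum, htsq]
      simp
    · rw [Metric.mem_ball, euclid_dist_sq]
      have hs : ∑ i, (sliceEmb k t y i - EuclideanSpace.single (0 : Fin (k+1)) (1:ℝ) i)^2
          = (t - 1)^2 + ∑ i : Fin k, (y i)^2 := by
        rw [sliceEmb_def, Fin.sum_univ_succ]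
        congr 1
        · refine Finset.sum_congr rfl fun i _ => ?_
          show (y i - EuclideanSpace.single (0 : Fin (k+1)) (1:ℝ) i.succ)^2 = (y i)^2
          simp [EuclideanSpace.single_apply, Fin.succ_ne_zero]
      rw [hs, hysum]
      rw [Real.sqrt_lt' hδ]
      nlinarith
    · rw [sliceEmb_def]; rfl
  have h1 : 0 < volume (Metric.ball (0 : EuclideanSpace ℝ (Fin k)) δ') :=
    Metric.measure_ball_pos _ _ hδ'pos
  have h2 := Measure.le_iff.1 (volume_le_hausdorff k) (Metric.ball (0 : EuclideanSpace ℝ (Fin k)) δ') measurableSet_ball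
  have h3 := measure_mono hsub (μ := (μH[(k:ℝ)] : Measure (EuclideanSpace ℝ (Fin k))))
  have h4 := (tail_lipschitz k).hausdorffMeasure_image_le (by positivity : (0:ℝ) ≤ (k:ℝ))
    (Metric.sphere (0 : EuclideanSpace ℝ (Fin (k+1))) 1 ∩ Metric.ball (EuclideanSpace.single 0 1) δ)
  exact lt_of_lt_of_le h1 (le_trans h2 (le_trans h3 (by simpa using h4)))

lemma cap_pos (k : ℕ) (ψ : EuclideanSpace ℝ (Fin (k+1))) (hψ : ‖ψ‖ = 1) {δ : ℝ} (hδ : 0 < δ) :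
    0 < μH[(k:ℝ)] (Metric.sphere (0 : EuclideanSpace ℝ (Fin (k+1))) 1 ∩ Metric.ball ψ δ) := by
  obtain ⟨U, hU⟩ := exists_rot k ψ hψ
  have himg : ⇑U '' (Metric.sphere (0 : EuclideanSpace ℝ (Fin (k+1))) 1 ∩
      Metric.ball (EuclideanSpace.single 0 1) δ) =
      Metric.sphere (0 : EuclideanSpace ℝ (Fin (k+1))) 1 ∩ Metric.ball ψ δ := by
    rw [Set.image_inter U.injective]
    congr 1
    · have := U.toIsometryEquiv.image_sphere 0 1
      simpa using this
    · have := U.toIsometryEquiv.image_ball (EuclideanSpace.single 0 1) δ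
      rw [show U.toIsometryEquiv (EuclideanSpace.single 0 1) = ψ from hU] at this
      simpa using this
  rw [← himg, U.isometry.hausdorffMeasure_image (Or.inl (by positivity))]
  exact cap_pos_e k hδ



variable {N : ℕ}

lemma compactSupport_schwartz {V : Type*} [NormedAddCommGroup V] [InnerProductSpace ℝ V]
    [FiniteDimensional ℝ V] (g : V → ℂ) (hg : ContDiff ℝ ((⊤:ℕ∞):WithTop ℕ∞) g) (hsupp : HasCompactSupport g) :
    ∃ G : SchwartzMap V ℂ, ⇑G = g := by
  refine ⟨⟨g, hg, ?_⟩, rfl⟩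
  intro kk nn
  have hcont : Continuous fun x => ‖x‖ ^ kk * ‖iteratedFDeriv ℝ nn g x‖ :=
    ((continuous_norm.pow kk).mul
      (hg.continuous_iteratedFDeriv (by exact_mod_cast le_top)).norm)
  have hsupp2 : HasCompactSupport fun x => ‖x‖ ^ kk * ‖iteratedFDeriv ℝ nn g x‖ :=
    ((hsupp.iteratedFDeriv nn).norm).mul_left
  obtain ⟨C, hC⟩ := hcont.bounded_above_of_compact_support hsupp2
  exact ⟨C, fun x => le_trans (le_abs_self _) (by rw [← Real.norm_eq_abs]; exact hC x)⟩

set_option maxHeartbeats 2000000 in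
lemma fourier_inj {V : Type*} [NormedAddCommGroup V] [InnerProductSpace ℝ V]
    [FiniteDimensional ℝ V] [MeasurableSpace V] [BorelSpace V]
    (u : V → ℂ) (hu : Integrable u volume)
    (h : ∀ ξ : V, 𝓕 u ξ = 0) : ∀ᵐ x : V ∂volume, u x = 0 := by
  apply ae_eq_zero_of_integral_contDiff_smul_eq_zero hu.locallyIntegrable
  intro g hg hgsupp
  set gc : V → ℂ := fun x => (g x : ℂ) with hgc
  have hgc_smooth : ContDiff ℝ ((⊤:ℕ∞):WithTop ℕ∞) gc := Complex.ofRealCLM.contDiff.comp hg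
  have hgc_supp : HasCompactSupport gc := hgsupp.comp_left (g := Complex.ofReal) (by simp)
  obtain ⟨G, hG⟩ := compactSupport_schwartz gc hgc_smooth hgc_supp
  set h0 : SchwartzMap V ℂ := 𝓕⁻ G with hh0
  have hkey : 𝓕 ⇑h0 = ⇑G := by
    have h1 : ⇑(𝓕 h0 : SchwartzMap V ℂ) = 𝓕 ⇑h0 :=
      SchwartzMap.fourier_coe h0
    rw [← h1, hh0, FourierTransform.fourier_fourierInv_eq]
  have hflip : (innerₗ V).flip = innerₗ V := by
    apply LinearMap.ext; intro x; apply LinearMap.ext; intro y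
    simp only [LinearMap.flip_apply, innerₗ_apply_apply]
    exact real_inner_comm _ _
  have hmul := VectorFourier.integral_fourierIntegral_smul_eq_flip (L := innerₗ V)
    (μ := volume) (ν := volume) Real.continuous_fourierChar continuous_inner hu h0.integrable
  rw [hflip] at hmul
  have hL : ∫ ξ : V, (VectorFourier.fourierIntegral Real.fourierChar volume (innerₗ V) u ξ) • h0 ξ = 0 := by
    have : ∀ ξ : V, VectorFourier.fourierIntegral Real.fourierChar volume (innerₗ V) u ξ = 0 :=
      fun ξ => h ξ
    simp [this]
  rw [hL] at hmul
  have hR : ∀ x : V, VectorFourier.fourierIntegral Real.fourierChar volume (innerₗ V) (⇑h0) x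
      = gc x := by
    intro x
    rw [show VectorFourier.fourierIntegral Real.fourierChar volume (innerₗ V) (⇑h0) x
      = 𝓕 (⇑h0) x from rfl, hkey, hG]
  have : ∫ x : V, u x • gc x = 0 := by
    calc ∫ x : V, u x • gc x
        = ∫ x : V, u x • VectorFourier.fourierIntegral Real.fourierChar volume (innerₗ V) (⇑h0) x := by
          congr 1; funext x; rw [hR x]
      _ = 0 := hmul.symm
  calc ∫ x : V, g x • u x = ∫ x : V, u x • gc x := by
        congr 1; funext x
        rw [hgc]
        simp only [smul_eq_mul]
        rw [Complex.real_smul, mul_comm]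
    _ = 0 := this

set_option maxHeartbeats 2000000 in
lemma slice_fourier (k : ℕ)
    (U : EuclideanSpace ℝ (Fin (k+1)) ≃ₗᵢ[ℝ] EuclideanSpace ℝ (Fin (k+1)))
    (u : EuclideanSpace ℝ (Fin (k+1)) → ℂ) (hu : Integrable u volume)
    (hslice : ∀ᵐ r : ℝ ∂volume, (∫ y, u (U (sliceEmb k r y))) = 0) (σ : ℝ) :
    𝓕 u (σ • U (EuclideanSpace.single 0 1)) = 0 := by
  set ξ := σ • U (EuclideanSpace.single (0 : Fin (k+1)) (1:ℝ)) with hξ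
  set T : ℝ × EuclideanSpace ℝ (Fin k) → EuclideanSpace ℝ (Fin (k+1)) :=
    fun p => U (sliceEmb k p.1 p.2) with hTdef
  have hT : MeasurePreserving T ((volume : Measure ℝ).prod volume) volume :=
    U.measurePreserving.comp (sliceProd_measurePreserving k)
  have hF : Integrable (fun v => Real.fourierChar (-⟪v, ξ⟫) • u v) volume := by
    have := (VectorFourier.fourierIntegral_convergent_iff (L := innerₗ (EuclideanSpace ℝ (Fin (k+1))))
      Real.continuous_fourierChar continuous_inner ξ).2 hu
    simpa using this
  have hFT : Integrable (fun p : ℝ × EuclideanSpace ℝ (Fin k) =>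
      Real.fourierChar (-⟪T p, ξ⟫) • u (T p)) ((volume : Measure ℝ).prod volume) :=
    (hT.integrable_comp hF.1).2 hF
  have hinner : ∀ p : ℝ × EuclideanSpace ℝ (Fin k), ⟪T p, ξ⟫ = σ * p.1 := by
    intro p
    rw [hξ, real_inner_smul_right, hTdef]
    simp only
    rw [LinearIsometryEquiv.inner_map_map, EuclideanSpace.inner_single_right]
    simp [sliceEmb_apply_zero]
  calc 𝓕 u ξ = ∫ v, Real.fourierChar (-⟪v, ξ⟫) • u v :=
        Real.fourier_eq u ξ
    _ = ∫ p, Real.fourierChar (-⟪T p, ξ⟫) • u (T p) ∂((volume : Measure ℝ).prod volume) := by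
        rw [← hT.map_eq, integral_map hT.measurable.aemeasurable]
        rw [hT.map_eq]
        exact ((Real.continuous_fourierChar.comp
          ((continuous_id.inner continuous_const).neg)).aestronglyMeasurable).smul hu.1
    _ = ∫ r : ℝ, ∫ y, Real.fourierChar (-⟪T (r, y), ξ⟫) • u (T (r, y)) := integral_prod _ hFT
    _ = 0 := by
        rw [← integral_zero ℝ ℂ]
        apply integral_congr_ae
        filter_upwards [hslice] with r hr
        have : ∀ y : EuclideanSpace ℝ (Fin k),
            Real.fourierChar (-⟪T (r, y), ξ⟫) • u (T (r, y))
              = (Real.fourierChar (-(σ * r)) : ℂ) * u (T (r, y)) := by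
          intro y
          rw [hinner (r, y)]
          rfl
        simp only [this]
        rw [MeasureTheory.integral_const_mul]
        have hr' : (∫ y, u (T (r, y))) = 0 := hr
        rw [hr', mul_zero]

end RadonNS

namespace RadonNS

set_option maxHeartbeats 1000000 in
lemma adm_integrable {n m : ℕ} {p s : ℝ} (hp : 1 < p) {Ω : Set (EuclideanSpace ℝ (Fin n))}
    (hΩbd : Bornology.IsBounded Ω) (hΩop : IsOpen Ω)
    {K : Set (EuclideanSpace ℝ (Fin m))} {w : EuclideanSpace ℝ (Fin n) → EuclideanSpace ℝ (Fin m)}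
    (hw : Adm p s Ω K w) : Integrable w volume := by
  obtain ⟨hmeas, hzero, hae, hlp, -, -⟩ := hw
  refine ⟨hmeas.aestronglyMeasurable, ?_⟩
  rw [hasFiniteIntegral_def]
  have hind : ∀ x, (‖w x‖₊ : ℝ≥0∞) = Ω.indicator (fun x => (‖w x‖₊ : ℝ≥0∞)) x := by
    intro x
    by_cases hx : x ∈ Ω
    · rw [Set.indicator_of_mem hx]
    · rw [Set.indicator_of_notMem hx, hzero x hx]; simp
  calc ∫⁻ x, (‖w x‖₊ : ℝ≥0∞) ∂volume
      = ∫⁻ x, Ω.indicator (fun x => (‖w x‖₊ : ℝ≥0∞)) x ∂volume := by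
        apply lintegral_congr; exact hind
    _ = ∫⁻ x in Ω, (‖w x‖₊ : ℝ≥0∞) ∂volume := lintegral_indicator hΩop.measurableSet _
    _ < ⊤ := by
        have hconj : p.HolderConjugate (p/(p-1)) := Real.HolderConjugate.conjExponent hp
        have hfm : AEMeasurable (fun x => (‖w x‖₊ : ℝ≥0∞)) (volume.restrict Ω) :=
          (hmeas.nnnorm.coe_nnreal_ennreal).aemeasurable
        have hh := ENNReal.lintegral_mul_le_Lp_mul_Lq (volume.restrict Ω) hconj hfm
          aemeasurable_const (g := fun _ => (1:ℝ≥0∞))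
        simp only [Pi.mul_apply, mul_one, ENNReal.one_rpow] at hh
        have hlast : (∫⁻ _ in Ω, (1:ℝ≥0∞) ∂volume) = volume Ω := by simp
        calc ∫⁻ x in Ω, (‖w x‖₊ : ℝ≥0∞) ∂volume
            ≤ (∫⁻ x in Ω, (‖w x‖₊ : ℝ≥0∞) ^ p ∂volume) ^ (1/p) *
              (∫⁻ _ in Ω, (1:ℝ≥0∞) ∂volume) ^ (1/(p/(p-1))) := hh
          _ < ⊤ := by
              rw [hlast]
              apply ENNReal.mul_lt_top
              · exact ENNReal.rpow_lt_top_of_nonneg (by positivity) hlp.ne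
              · exact ENNReal.rpow_lt_top_of_nonneg (le_of_lt (div_pos one_pos (div_pos (by linarith) (by linarith)))) hΩbd.measure_lt_top.ne

lemma sphere_ae_neg {n : ℕ} {d : ℝ} {P : EuclideanSpace ℝ (Fin n) → Prop}
    (hP : ∀ᵐ φ ∂((μH[d] : Measure (EuclideanSpace ℝ (Fin n))).restrict
      (Metric.sphere 0 1)), P φ) :
    ∀ᵐ φ ∂((μH[d] : Measure (EuclideanSpace ℝ (Fin n))).restrict (Metric.sphere 0 1)),
      P (-φ) := by
  have hsm : MeasurableSet (Metric.sphere (0 : EuclideanSpace ℝ (Fin n)) 1) :=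
    Metric.isClosed_sphere.measurableSet
  rw [ae_iff] at hP ⊢
  rw [Measure.restrict_apply' hsm] at hP ⊢
  have hneg : Isometry (fun x : EuclideanSpace ℝ (Fin n) => -x) := isometry_neg
  have hsub : {φ : EuclideanSpace ℝ (Fin n) | ¬ P (-φ)} ∩ Metric.sphere 0 1 ⊆
      (fun x : EuclideanSpace ℝ (Fin n) => -x) ''
        ({φ | ¬ P φ} ∩ Metric.sphere 0 1) := by
    rintro φ ⟨hφ, hφs⟩
    refine ⟨-φ, ⟨hφ, ?_⟩, neg_neg φ⟩
    simpa using hφs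
  apply measure_mono_null hsub
  rw [hneg.hausdorffMeasure_image (Or.inr neg_surjective)]
  exact hP

lemma radonT_negneg {n m : ℕ} (w : EuclideanSpace ℝ (Fin n) → EuclideanSpace ℝ (Fin m))
    (r : ℝ) (φ : EuclideanSpace ℝ (Fin n)) : radonT w r (-φ) = radonT w (-r) φ := by
  unfold radonT
  congr 1
  ext x
  simp only [Set.mem_setOf_eq, inner_neg_right, neg_eq_iff_eq_neg]

lemma ae_glue {Q : ℝ → Prop}
    (hpos : ∀ᵐ r ∂(volume.restrict (Set.Ici (0:ℝ))), Q r)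
    (hneg : ∀ᵐ r ∂(volume.restrict (Set.Ici (0:ℝ))), Q (-r)) :
    ∀ᵐ r ∂(volume : Measure ℝ), Q r := by
  rw [ae_iff] at hpos hneg ⊢
  rw [Measure.restrict_apply' measurableSet_Ici] at hpos hneg
  have h1 : {r : ℝ | ¬ Q r} ⊆ ({r | ¬ Q r} ∩ Set.Ici 0) ∪
      (fun t : ℝ => -t) ⁻¹' ({t | ¬ Q (-t)} ∩ Set.Ici 0) ∪ {0} := by
    intro r hr
    rcases le_or_gt 0 r with h | h
    · exact Or.inl (Or.inl ⟨hr, h⟩)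
    · refine Or.inl (Or.inr ?_)
      simp only [Set.mem_preimage, Set.mem_inter_iff, Set.mem_setOf_eq, Set.mem_Ici]
      constructor
      · simpa using hr
      · linarith
  apply measure_mono_null h1
  apply le_antisymm _ zero_le
  calc volume (({r : ℝ | ¬ Q r} ∩ Set.Ici 0) ∪
        (fun t : ℝ => -t) ⁻¹' ({t | ¬ Q (-t)} ∩ Set.Ici 0) ∪ {0})
      ≤ volume (({r : ℝ | ¬ Q r} ∩ Set.Ici 0) ∪
        (fun t : ℝ => -t) ⁻¹' ({t | ¬ Q (-t)} ∩ Set.Ici 0)) + volume ({0} : Set ℝ) :=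
        measure_union_le _ _
    _ ≤ (volume ({r : ℝ | ¬ Q r} ∩ Set.Ici 0) +
        volume ((fun t : ℝ => -t) ⁻¹' ({t | ¬ Q (-t)} ∩ Set.Ici 0))) + volume ({0} : Set ℝ) :=
        add_le_add_left (measure_union_le _ _) _
    _ = 0 := by
        rw [hpos, Real.volume_singleton]
        rw [(Measure.measurePreserving_neg (volume : Measure ℝ)).measure_preimage]
        · rw [hneg]; simp
        · exact NullMeasurableSet.of_null hneg

lemma phiReg_congr {n m : ℕ} (p s : ℝ) (l : ℕ) (Ω : Set (EuclideanSpace ℝ (Fin n)))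
    (ρ : EuclideanSpace ℝ (Fin n) → ℝ)
    (d : EuclideanSpace ℝ (Fin m) → EuclideanSpace ℝ (Fin m) → ℝ)
    {w1 w2 : EuclideanSpace ℝ (Fin n) → EuclideanSpace ℝ (Fin m)}
    (h : w1 =ᵐ[volume] w2) : PhiReg p s l Ω ρ d w1 = PhiReg p s l Ω ρ d w2 := by
  unfold PhiReg
  apply lintegral_congr_ae
  filter_upwards [ae_restrict_of_ae h] with x hx
  apply lintegral_congr_ae
  filter_upwards [ae_restrict_of_ae h] with y hy
  rw [hx, hy]

end RadonNS

namespace RadonNS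

set_option maxHeartbeats 4000000 in
lemma radon_unique {k m : ℕ}
    (w1 w2 : EuclideanSpace ℝ (Fin (k+1)) → EuclideanSpace ℝ (Fin m))
    (h1m : Measurable w1) (h2m : Measurable w2)
    (h1i : Integrable w1 volume) (h2i : Integrable w2 volume)
    (v0 : ℝ → EuclideanSpace ℝ (Fin (k+1)) → EuclideanSpace ℝ (Fin m))
    (hsol1 : IsRadonSol w1 v0) (hsol2 : IsRadonSol w2 v0) :
    w1 =ᵐ[volume] w2 := by
  obtain ⟨c, hc1, hcne, hc⟩ := hausdorff_eq_smul_volume k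
  have hcast : ((k+1 : ℕ) : ℝ) - 1 = (k : ℝ) := by push_cast; ring
  have hμcast : (μH[((k+1 : ℕ) : ℝ) - 1] : Measure (EuclideanSpace ℝ (Fin (k+1))))
      = μH[(k : ℝ)] := by rw [hcast]
  have hc0 : (0:ℝ) < c.toReal :=
    ENNReal.toReal_pos (lt_of_lt_of_le zero_lt_one hc1).ne' hcne
  have hradon : ∀ (w : EuclideanSpace ℝ (Fin (k+1)) → EuclideanSpace ℝ (Fin m)),
      Measurable w →
      ∀ (U : EuclideanSpace ℝ (Fin (k+1)) ≃ₗᵢ[ℝ] EuclideanSpace ℝ (Fin (k+1))) (r : ℝ),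
      radonT w r (U (EuclideanSpace.single 0 1)) =
        c.toReal • ∫ y, w (U (sliceEmb k r y)) := by
    intro w hwm U r
    unfold radonT
    rw [hμcast]
    exact hyperplane_integral k c hc U w hwm.stronglyMeasurable r
  set u : Fin m → EuclideanSpace ℝ (Fin (k+1)) → ℂ :=
    fun j x => ((w1 x j - w2 x j : ℝ) : ℂ) with hu
  have huint : ∀ j : Fin m, Integrable (u j) volume := by
    intro j
    have := (Complex.ofRealCLM.comp (EuclideanSpace.proj (𝕜 := ℝ) j)).integrable_comp
      (h1i.sub h2i)
    exact this
  -- key: Fourier transform of components vanishes on good rays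
  have hkey : ∀ φ : EuclideanSpace ℝ (Fin (k+1)), ‖φ‖ = 1 →
      (∀ᵐ r ∂(volume.restrict (Set.Ici (0:ℝ))), radonT w1 r φ = radonT w2 r φ) →
      (∀ᵐ r ∂(volume.restrict (Set.Ici (0:ℝ))), radonT w1 r (-φ) = radonT w2 r (-φ)) →
      ∀ (j : Fin m) (σ : ℝ), 𝓕 (u j) (σ • φ) = 0 := by
    intro φ hφ hpos hneg j σ
    obtain ⟨U, hU⟩ := exists_rot k φ hφ
    have hQpos : ∀ᵐ r ∂(volume.restrict (Set.Ici (0:ℝ))),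
        (∫ y, w1 (U (sliceEmb k r y))) = (∫ y, w2 (U (sliceEmb k r y))) := by
      filter_upwards [hpos] with r hr
      have e1 := hradon w1 h1m U r
      have e2 := hradon w2 h2m U r
      rw [hU] at e1 e2
      exact smul_right_injective (EuclideanSpace ℝ (Fin m)) hc0.ne'
        (by show c.toReal • _ = c.toReal • _; rw [← e1, ← e2]; exact hr)
    have hQneg : ∀ᵐ r ∂(volume.restrict (Set.Ici (0:ℝ))),
        (∫ y, w1 (U (sliceEmb k (-r) y))) = (∫ y, w2 (U (sliceEmb k (-r) y))) := by
      filter_upwards [hneg] with r hr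
      rw [radonT_negneg w1 r φ, radonT_negneg w2 r φ] at hr
      have e1 := hradon w1 h1m U (-r)
      have e2 := hradon w2 h2m U (-r)
      rw [hU] at e1 e2
      exact smul_right_injective (EuclideanSpace ℝ (Fin m)) hc0.ne'
        (by show c.toReal • _ = c.toReal • _; rw [← e1, ← e2]; exact hr)
    have hQ : ∀ᵐ r ∂(volume : Measure ℝ),
        (∫ y, w1 (U (sliceEmb k r y))) = (∫ y, w2 (U (sliceEmb k r y))) :=
      ae_glue hQpos hQneg
    have hT : MeasurePreserving
        (fun pz : ℝ × EuclideanSpace ℝ (Fin k) => U (sliceEmb k pz.1 pz.2))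
        ((volume : Measure ℝ).prod volume) volume :=
      U.measurePreserving.comp (sliceProd_measurePreserving k)
    have hint1 : ∀ᵐ r ∂(volume : Measure ℝ),
        Integrable (fun y => w1 (U (sliceEmb k r y))) volume :=
      ((hT.integrable_comp h1i.1).2 h1i).prod_right_ae
    have hint2 : ∀ᵐ r ∂(volume : Measure ℝ),
        Integrable (fun y => w2 (U (sliceEmb k r y))) volume :=
      ((hT.integrable_comp h2i.1).2 h2i).prod_right_ae
    have hslice : ∀ᵐ r ∂(volume : Measure ℝ),
        (∫ y, u j (U (sliceEmb k r y))) = 0 := by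
      filter_upwards [hQ, hint1, hint2] with r hQr hi1 hi2
      have hsub : (∫ y, (w1 (U (sliceEmb k r y)) - w2 (U (sliceEmb k r y)))) = 0 := by
        rw [integral_sub hi1 hi2, hQr]; exact sub_self _
      calc (∫ y, u j (U (sliceEmb k r y)))
          = ∫ y, (Complex.ofRealCLM.comp (EuclideanSpace.proj (𝕜 := ℝ) j))
              (w1 (U (sliceEmb k r y)) - w2 (U (sliceEmb k r y))) := by rfl
        _ = (Complex.ofRealCLM.comp (EuclideanSpace.proj (𝕜 := ℝ) j))
              (∫ y, (w1 (U (sliceEmb k r y)) - w2 (U (sliceEmb k r y)))) :=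
            ContinuousLinearMap.integral_comp_comm _ (hi1.sub hi2)
        _ = 0 := by rw [hsub, _root_.map_zero]
    have := slice_fourier k U (u j) (huint j) hslice σ
    rwa [hU] at this
  -- the good directions are dense in the sphere
  have hsm : MeasurableSet (Metric.sphere (0 : EuclideanSpace ℝ (Fin (k+1))) 1) :=
    Metric.isClosed_sphere.measurableSet
  have hsol1' : ∀ᵐ φ ∂((μH[((k+1 : ℕ) : ℝ) - 1] :
      Measure (EuclideanSpace ℝ (Fin (k+1)))).restrict (Metric.sphere 0 1)),
      ∀ᵐ r ∂(volume.restrict (Set.Ici (0 : ℝ))), radonT w1 r φ = v0 r φ := hsol1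
  have hsol2' : ∀ᵐ φ ∂((μH[((k+1 : ℕ) : ℝ) - 1] :
      Measure (EuclideanSpace ℝ (Fin (k+1)))).restrict (Metric.sphere 0 1)),
      ∀ᵐ r ∂(volume.restrict (Set.Ici (0 : ℝ))), radonT w2 r φ = v0 r φ := hsol2
  have hP : ∀ᵐ φ ∂((μH[((k+1 : ℕ) : ℝ) - 1] :
      Measure (EuclideanSpace ℝ (Fin (k+1)))).restrict (Metric.sphere 0 1)),
      ∀ᵐ r ∂(volume.restrict (Set.Ici (0 : ℝ))), radonT w1 r φ = radonT w2 r φ := by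
    filter_upwards [hsol1', hsol2'] with φ h1 h2
    filter_upwards [h1, h2] with r hr1 hr2
    rw [hr1, hr2]
  have hPn := sphere_ae_neg (P := fun φ => ∀ᵐ r ∂(volume.restrict (Set.Ici (0 : ℝ))),
    radonT w1 r φ = radonT w2 r φ) hP
  have hGood := hP.and hPn
  rw [ae_iff, Measure.restrict_apply' hsm] at hGood
  have hdense : ∀ ψ : EuclideanSpace ℝ (Fin (k+1)), ‖ψ‖ = 1 → ∀ ε : ℝ, 0 < ε →
      ∃ φ, ‖φ‖ = 1 ∧
        ((∀ᵐ r ∂(volume.restrict (Set.Ici (0 : ℝ))), radonT w1 r φ = radonT w2 r φ) ∧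
         (∀ᵐ r ∂(volume.restrict (Set.Ici (0 : ℝ))), radonT w1 r (-φ) = radonT w2 r (-φ))) ∧
        dist φ ψ < ε := by
    intro ψ hψ ε hε
    by_contra hcon
    push_neg at hcon
    have hsub : Metric.sphere (0 : EuclideanSpace ℝ (Fin (k+1))) 1 ∩ Metric.ball ψ ε ⊆
        {φ | ¬ ((∀ᵐ r ∂(volume.restrict (Set.Ici (0 : ℝ))), radonT w1 r φ = radonT w2 r φ) ∧
          (∀ᵐ r ∂(volume.restrict (Set.Ici (0 : ℝ))), radonT w1 r (-φ) = radonT w2 r (-φ)))} ∩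
          Metric.sphere 0 1 := by
      rintro φ ⟨hφs, hφb⟩
      have hφn : ‖φ‖ = 1 := by rwa [mem_sphere_zero_iff_norm] at hφs
      have hφd : dist φ ψ < ε := Metric.mem_ball.1 hφb
      refine ⟨?_, hφs⟩
      intro hcontra
      exact absurd hφd (not_lt.2 (hcon φ hφn hcontra))
    have hpos := cap_pos k ψ hψ hε
    rw [← hμcast] at hpos
    have hle := measure_mono (μ := (μH[((k+1 : ℕ) : ℝ) - 1] :
      Measure (EuclideanSpace ℝ (Fin (k+1))))) hsub
    rw [hGood] at hle
    exact absurd (le_antisymm hle zero_le) hpos.ne'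
  -- Fourier transforms vanish identically
  have hfour : ∀ (j : Fin m) (ξ : EuclideanSpace ℝ (Fin (k+1))),
      𝓕 (u j) ξ = 0 := by
    intro j ξ
    have hcont : Continuous (𝓕 (u j)) :=
      VectorFourier.fourierIntegral_continuous Real.continuous_fourierChar
        continuous_inner (huint j)
    have hZ : IsClosed {ξ' : EuclideanSpace ℝ (Fin (k+1)) |
        𝓕 (u j) ξ' = 0} := isClosed_eq hcont continuous_const
    rcases eq_or_ne ξ 0 with rfl | hξ
    · obtain ⟨φ, hφ1, hφP, -⟩ := hdense (EuclideanSpace.single 0 1) (by simp) 1 one_pos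
      have := hkey φ hφ1 hφP.1 hφP.2 j 0
      simpa using this
    · have hnξ : (0:ℝ) < ‖ξ‖ := norm_pos_iff.2 hξ
      set ψ : EuclideanSpace ℝ (Fin (k+1)) := ‖ξ‖⁻¹ • ξ with hψdef
      have hψ : ‖ψ‖ = 1 := by
        rw [hψdef, norm_smul, norm_inv, norm_norm, inv_mul_cancel₀ hnξ.ne']
      have hξψ : ‖ξ‖ • ψ = ξ := by
        rw [hψdef, smul_inv_smul₀ hnξ.ne']
      have hmem : ξ ∈ closure {ξ' : EuclideanSpace ℝ (Fin (k+1)) |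
          𝓕 (u j) ξ' = 0} := by
        rw [Metric.mem_closure_iff]
        intro ε hε
        obtain ⟨φ, hφ1, hφP, hφd⟩ := hdense ψ hψ (ε / ‖ξ‖) (div_pos hε hnξ)
        refine ⟨‖ξ‖ • φ, hkey φ hφ1 hφP.1 hφP.2 j ‖ξ‖, ?_⟩
        have hd : dist ξ (‖ξ‖ • φ) = ‖ξ‖ * dist ψ φ := by
          nth_rewrite 1 [← hξψ]
          rw [dist_smul₀, norm_norm]
        rw [hd, dist_comm ψ φ]
        calc ‖ξ‖ * dist φ ψ < ‖ξ‖ * (ε / ‖ξ‖) := by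
              exact mul_lt_mul_of_pos_left hφd hnξ
          _ = ε := by field_simp
      rwa [hZ.closure_eq] at hmem
  have haej : ∀ᵐ x ∂(volume : Measure (EuclideanSpace ℝ (Fin (k+1)))),
      ∀ j : Fin m, u j x = 0 :=
    ae_all_iff.2 (fun j => fourier_inj (u j) (huint j) (hfour j))
  filter_upwards [haej] with x hx
  ext j
  have := hx j
  rw [hu] at this
  simp only at this
  have hr : w1 x j - w2 x j = 0 := Complex.ofReal_eq_zero.mp this
  linarith

end RadonNS

open RadonNS
set_option maxHeartbeats 1000000

/-- existence of a `Φ_d^l`-minimizing solution of `R[w] = v⁰`. -/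
theorem exists_phi_minimizing_solution{n m : ℕ} (p s : ℝ) (hp : 1 < p) (hs : 0 < s) (hs1 : s < 1)
    (l : ℕ) (hl : l = 0 ∨ l = 1) (R : ℝ) (hR : 0 < R)
    (Ω : Set (EuclideanSpace ℝ (Fin n))) (hΩne : Ω.Nonempty)
    (hΩbd : Bornology.IsBounded Ω) (hΩop : IsOpen Ω) (hΩconn : IsConnected Ω)
    (hΩlip : HasLipschitzBoundary Ω) (hΩR : Ω ⊆ Metric.ball (0 : EuclideanSpace ℝ (Fin n)) R)
    (K : Set (EuclideanSpace ℝ (Fin m))) (hKne : K.Nonempty) (hKcl : IsClosed K)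
    (d : EuclideanSpace ℝ (Fin m) → EuclideanSpace ℝ (Fin m) → ℝ) (Cu : ℝ) (hCu : 0 < Cu)
    (hd : IsMetricOn K d) (hde : NormalizedEquiv K d Cu)
    (ρ : EuclideanSpace ℝ (Fin n) → ℝ) (hρ : IsMollifier ρ) (hsep : SeparationProperty ρ)
    (v0 : ℝ → EuclideanSpace ℝ (Fin n) → EuclideanSpace ℝ (Fin m))
    (hv0 : sigmaLpPow p v0 < ⊤)
    (hex : ∃ w, Adm p s Ω K w ∧ IsRadonSol w v0) :
    ∃ wstar, Adm p s Ω K wstar ∧ IsRadonSol wstar v0 ∧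
      ∀ w, Adm p s Ω K w → IsRadonSol w v0 →
        PhiReg p s l Ω ρ d wstar ≤ PhiReg p s l Ω ρ d w := by
  obtain ⟨w0, hw0, hsol0⟩ := hex
  refine ⟨w0, hw0, hsol0, ?_⟩
  intro w hw hsol
  cases n with
  | zero =>
    have hp0 : p ≠ 0 := by positivity
    have hzero : PhiReg p s l Ω ρ d w0 = 0 := by
      unfold PhiReg
      have h0 : (0 : ℝ≥0∞) = ∫⁻ _ in Ω, 0 ∂(volume : Measure (EuclideanSpace ℝ (Fin 0))) := by
        rw [lintegral_zero]
      rw [h0]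
      apply lintegral_congr_ae
      filter_upwards [hw0.2.2.2.2.2] with x hx
      have hdzero : d (w0 x) (w0 x) = 0 := (hd.2.1 (w0 x) hx (w0 x) hx).mpr rfl
      have hall : ∀ y : EuclideanSpace ℝ (Fin 0),
          ENNReal.ofReal (d (w0 x) (w0 y) ^ p / ‖x - y‖ ^ ((0 : ℕ) + p * s) *
            ρ (x - y) ^ l) = 0 := by
        intro y
        have hy : w0 y = w0 x := by
          have hyx : y = x := Subsingleton.elim y x
          rw [hyx]
        rw [hy, hdzero, Real.zero_rpow hp0, zero_div, zero_mul, ENNReal.ofReal_zero]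
      calc ∫⁻ y in Ω, ENNReal.ofReal (d (w0 x) (w0 y) ^ p / ‖x - y‖ ^ ((0:ℕ) + p * s) *
            ρ (x - y) ^ l) ∂volume
          = ∫⁻ _ in Ω, 0 ∂(volume : Measure (EuclideanSpace ℝ (Fin 0))) :=
            lintegral_congr fun y => hall y
        _ = 0 := lintegral_zero
    rw [hzero]
    exact zero_le
  | succ k =>
    have h1i := adm_integrable hp hΩbd hΩop hw0
    have h2i := adm_integrable hp hΩbd hΩop hw
    have heq : w0 =ᵐ[volume] w :=
      radon_unique w0 w hw0.1 hw.1 h1i h2i v0 hsol0 hsol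
    exact le_of_eq (phiReg_congr p s l Ω ρ d heq)
end
end
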